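/- Let G be a graph and H an attachment set. Then η(altan(G,H)) = η(altan²(G,H)), i.e., the nullity of the second iterated altan equals the nullity of the first altan. -/

import Mathlib

open scoped Classical

/-- The nullity of a graph: dimension of the kernel of its real adjacency matrix. -/
noncomputable def nullity {V : Type*} [Fintype V] (G : SimpleGraph V) : ℕ :=
  letI := Classical.decEq V
  letI := Classical.decRel G.Adj
  Module.finrank ℝ ↥(LinearMap.ker (Matrix.toLin' (G.adjMatrix ℝ)))

/-- `q` is a kernel eigenvector of `G`: the sum of `q` over each neighbourhood is `0`. -/
def IsKernelVector {V : Type*} [Fintype V] (G : SimpleGraph V) (q : V → ℝ) : Prop :=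
  ∀ v : V, ∑ u : V, (if G.Adj v u then q u else 0) = 0

/-- Underlying relation of the altan construction: vertices are `V ⊕ (Fin h ⊕ Fin h)`,
where `Sum.inr (Sum.inl i)` is `x_{i+1}` and `Sum.inr (Sum.inr i)` is `y_{i+1}`
(0-indexed versions of the 1-indexed `x_i, y_i`). -/
def altanRel {V : Type*} {h : ℕ} [NeZero h] (G : SimpleGraph V) (H : Fin h → V) :
    (V ⊕ (Fin h ⊕ Fin h)) → (V ⊕ (Fin h ⊕ Fin h)) → Prop
  | Sum.inl u, Sum.inl w => G.Adj u w
  | Sum.inl u, Sum.inr (Sum.inl i) => u = H i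
  | Sum.inr (Sum.inl i), Sum.inr (Sum.inr j) => j = i ∨ i = j + 1
  | _, _ => False

/-- The altan of `(G, H)`. -/
def altan {V : Type*} {h : ℕ} [NeZero h] (G : SimpleGraph V) (H : Fin h → V) :
    SimpleGraph (V ⊕ (Fin h ⊕ Fin h)) :=
  SimpleGraph.fromRel (altanRel G H)

/-- The special vector: `s(y_i) = (-1)^i` (1-indexed), `0` elsewhere. -/
def specialVector (V : Type*) (h : ℕ) : (V ⊕ (Fin h ⊕ Fin h)) → ℝ
  | Sum.inr (Sum.inr j) => (-1 : ℝ) ^ ((j : ℕ) + 1)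
  | _ => 0

/-- The induced attachment set `H' = (y_1, ..., y_h)` of the altan. -/
def inducedAttachment (V : Type*) (h : ℕ) : Fin h → (V ⊕ (Fin h ⊕ Fin h)) :=
  fun i => Sum.inr (Sum.inr i)

/-!
A kernel vector of `altan G H` vanishes on the inner new vertices `x_i`: their values alternate
around the cycle, which forces them to vanish when `h` is odd, and when `h` is even the symmetry
of the adjacency matrix makes them orthogonal to `s ∘ H` for every kernel vector `s` of `G`,
which forces them to vanish as soon as some `s` has a non-zero alternating sum on `H`. What is
left is a kernel vector `p` of `G` together with values `z` on the outer vertices `y_i` subject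
to `p (H i) + z i + z (i - 1) = 0`. The map `(p, z) ↦ p ∘ H + (z i + z (i - 1))ᵢ` is onto, by the
same alternation argument applied to a functional vanishing on its range, so these pairs form a
space of dimension `η G`. For the iterated altan, `G` is itself an altan, and for even `h` the
vector `specialVector` is the kernel vector needed.
-/

open Sum Matrix Fin.NatCast

section Alternating

variable {h : ℕ} [NeZero h]

theorem Fin.apply_natCast_of_alternating {R : Type*} [CommRing R] {a : Fin h → R}
    (ha : ∀ j, a j + a (j + 1) = 0) (n : ℕ) : a n = (-1) ^ n * a 0 := by
  induction n with
  | zero => simp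
  | succ n ih =>
    rw [Nat.cast_succ, pow_succ]
    linear_combination ha n - ih

theorem Fin.eq_zero_of_alternating {a : Fin h → ℝ} (ha : ∀ j, a j + a (j + 1) = 0)
    (hw : Even h → ∃ w : Fin h → ℝ, ∑ j : Fin h, (-1) ^ (j : ℕ) * w j ≠ 0 ∧ ∑ j, a j * w j = 0) :
    a = 0 := by
  have hval (j : Fin h) : a j = (-1) ^ (j : ℕ) * a 0 := by
    simpa using Fin.apply_natCast_of_alternating ha j
  suffices a 0 = 0 by
    funext j
    rw [hval, this, mul_zero, Pi.zero_apply]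
  rcases Nat.even_or_odd h with he | ho
  · obtain ⟨w, hw_ne, hw_perp⟩ := hw he
    have : a 0 * ∑ j : Fin h, (-1) ^ (j : ℕ) * w j = 0 := by
      rw [← hw_perp, Finset.mul_sum]
      exact Finset.sum_congr rfl fun j _ => by rw [hval j]; ring
    exact (mul_eq_zero.1 this).resolve_right hw_ne
  · have := Fin.apply_natCast_of_alternating ha h
    rw [Fin.natCast_self, ho.neg_one_pow] at this
    linarith

theorem Fin.neg_one_pow_val_natCast {R : Type*} [Monoid R] [HasDistribNeg R] (he : Even h)
    (n : ℕ) : (-1 : R) ^ ((n : Fin h) : ℕ) = (-1) ^ n := by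
  conv_rhs => rw [← Nat.mod_add_div n h, pow_add, pow_mul, he.neg_one_pow, one_pow, mul_one]
  rw [Fin.val_natCast]

theorem Fin.self_ne_add_one (hh : 2 ≤ h) (i : Fin h) : i ≠ i + 1 := by
  rw [ne_eq, left_eq_add, Fin.one_eq_zero_iff]
  omega

end Alternating

theorem Fintype.sum_ite_eq_or_eq {ι M : Type*} [Fintype ι] [DecidableEq ι] [AddCommMonoid M]
    {a b : ι} (hab : a ≠ b) (f : ι → M) :
    ∑ x, (if x = a ∨ x = b then f x else 0) = f a + f b := by
  rw [← Finset.sum_filter, ← Finset.sum_pair hab]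
  congr
  ext
  simp

def cyclicSum (R : Type*) [Semiring R] (h : ℕ) [NeZero h] : (Fin h → R) →ₗ[R] Fin h → R :=
  LinearMap.id + LinearMap.funLeft R R (· - 1)

section CyclicSum

variable {R : Type*} [Semiring R] {h : ℕ} [NeZero h]

theorem cyclicSum_apply (z : Fin h → R) (i : Fin h) : cyclicSum R h z i = z i + z (i - 1) := rfl

theorem cyclicSum_single (j : Fin h) :
    cyclicSum R h (Pi.single j 1) = Pi.single j 1 + Pi.single (j + 1) 1 := by
  ext k
  simp [cyclicSum_apply, Pi.single_apply, sub_eq_iff_eq_add]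

end CyclicSum

section Altan

variable {V : Type*} {h : ℕ} [NeZero h] (G : SimpleGraph V) (H : Fin h → V)

@[simp] theorem altan_adj_inl_inl (u w : V) : (altan G H).Adj (inl u) (inl w) ↔ G.Adj u w := by
  simp only [altan, SimpleGraph.fromRel_adj, altanRel, ne_eq, inl.injEq, G.adj_comm w u, or_self,
    and_iff_right_iff_imp]
  exact fun h => h.ne

variable [Fintype V]

theorem isKernelVector_iff_mulVec_eq_zero (q : V → ℝ) :
    IsKernelVector G q ↔ G.adjMatrix ℝ *ᵥ q = 0 := by
  simp [IsKernelVector, funext_iff, mulVec, dotProduct, SimpleGraph.adjMatrix_apply]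

theorem nullity_eq_finrank_ker :
    nullity G = Module.finrank ℝ (LinearMap.ker (toLin' (G.adjMatrix ℝ))) := rfl

def HasAlternatingKernelVector : Prop :=
  ∃ s, IsKernelVector G s ∧ ∑ j : Fin h, (-1) ^ (j : ℕ) * s (H j) ≠ 0

theorem altan_mulVec_inl (q : V ⊕ (Fin h ⊕ Fin h) → ℝ) (u : V) :
    ((altan G H).adjMatrix ℝ *ᵥ q) (inl u)
      = (G.adjMatrix ℝ *ᵥ (q ∘ inl)) u + ∑ i, if u = H i then q (inr (inl i)) else 0 := by
  simp only [mulVec, dotProduct, Fintype.sum_sum_type, SimpleGraph.adjMatrix_apply,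
    altan_adj_inl_inl]
  simp [altan, altanRel]

theorem altan_mulVec_inr_inl (hh : 2 ≤ h) (q : V ⊕ (Fin h ⊕ Fin h) → ℝ) (i : Fin h) :
    ((altan G H).adjMatrix ℝ *ᵥ q) (inr (inl i))
      = q (inl (H i)) + q (inr (inr i)) + q (inr (inr (i - 1))) := by
  have hne : i ≠ i - 1 := by simpa using (Fin.self_ne_add_one hh (i - 1)).symm
  simp only [mulVec, dotProduct, Fintype.sum_sum_type, SimpleGraph.adjMatrix_apply]
  simp [altan, altanRel, eq_comm (a := i), ← eq_sub_iff_add_eq, Fintype.sum_ite_eq_or_eq hne,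
    add_assoc]

theorem altan_mulVec_inr_inr (hh : 2 ≤ h) (q : V ⊕ (Fin h ⊕ Fin h) → ℝ) (j : Fin h) :
    ((altan G H).adjMatrix ℝ *ᵥ q) (inr (inr j))
      = q (inr (inl j)) + q (inr (inl (j + 1))) := by
  simp only [mulVec, dotProduct, Fintype.sum_sum_type, SimpleGraph.adjMatrix_apply]
  simp [altan, altanRel, eq_comm (a := j), Fintype.sum_ite_eq_or_eq (Fin.self_ne_add_one hh j)]

theorem altan_mulVec_eq_zero_iff (hh : 2 ≤ h) (q : V ⊕ (Fin h ⊕ Fin h) → ℝ) :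
    (altan G H).adjMatrix ℝ *ᵥ q = 0 ↔
      (∀ u, (G.adjMatrix ℝ *ᵥ (q ∘ inl)) u + ∑ i, (if u = H i then q (inr (inl i)) else 0) = 0) ∧
      (∀ i, q (inl (H i)) + q (inr (inr i)) + q (inr (inr (i - 1))) = 0) ∧
      (∀ j, q (inr (inl j)) + q (inr (inl (j + 1))) = 0) := by
  simp only [funext_iff, Sum.forall, altan_mulVec_inl, altan_mulVec_inr_inl G H hh,
    altan_mulVec_inr_inr G H hh, Pi.zero_apply]

theorem altan_kernel_apply_inr_inl_eq_zero (hh : 2 ≤ h)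
    (hs : Even h → HasAlternatingKernelVector G H) {q : V ⊕ (Fin h ⊕ Fin h) → ℝ}
    (hq : (altan G H).adjMatrix ℝ *ᵥ q = 0) (i : Fin h) :
    q (inr (inl i)) = 0 := by
  obtain ⟨hV, -, hY⟩ := (altan_mulVec_eq_zero_iff G H hh q).1 hq
  suffices (fun i => q (inr (inl i))) = 0 from congrFun this i
  refine Fin.eq_zero_of_alternating hY fun he => ?_
  obtain ⟨s, hs_ker, hs_ne⟩ := hs he
  refine ⟨s ∘ H, hs_ne, ?_⟩
  have hAs : (G.adjMatrix ℝ *ᵥ (q ∘ inl)) ⬝ᵥ s = 0 := by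
    rw [dotProduct_comm, dotProduct_mulVec, ← mulVec_transpose, G.transpose_adjMatrix,
      (isKernelVector_iff_mulVec_eq_zero G s).1 hs_ker, zero_dotProduct]
  have hAp : G.adjMatrix ℝ *ᵥ (q ∘ inl) = fun u => -∑ i, if u = H i then q (inr (inl i)) else 0 :=
    funext fun u => eq_neg_of_add_eq_zero_left (hV u)
  rw [hAp] at hAs
  simpa [dotProduct, Finset.sum_mul, ite_mul, Finset.sum_comm (s := (Finset.univ : Finset V))]
    using hAs

noncomputable def altanConstraint :
    LinearMap.ker (toLin' (G.adjMatrix ℝ)) × (Fin h → ℝ) →ₗ[ℝ] Fin h → ℝ :=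
  (LinearMap.funLeft ℝ ℝ H ∘ₗ (LinearMap.ker (toLin' (G.adjMatrix ℝ))).subtype).coprod
    (cyclicSum ℝ h)

theorem altanConstraint_apply (x : LinearMap.ker (toLin' (G.adjMatrix ℝ)) × (Fin h → ℝ)) :
    altanConstraint G H x = (x.1 : V → ℝ) ∘ H + cyclicSum ℝ h x.2 := rfl

theorem altanConstraint_surjective (hs : Even h → HasAlternatingKernelVector G H) :
    Function.Surjective (altanConstraint G H) := by
  rw [← LinearMap.dualMap_injective_iff, injective_iff_map_eq_zero]
  intro φ hφ
  have hφ' (x) : φ (altanConstraint G H x) = 0 := LinearMap.congr_fun hφ x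
  have ha : (fun j => φ (Pi.single j 1)) = 0 := by
    refine Fin.eq_zero_of_alternating (fun j => ?_) fun he => ?_
    · simpa [altanConstraint_apply, cyclicSum_single] using hφ' (0, Pi.single j 1)
    · obtain ⟨s, hs_ker, hs_ne⟩ := hs he
      have hs_mem : s ∈ LinearMap.ker (toLin' (G.adjMatrix ℝ)) := by
        rwa [LinearMap.mem_ker, toLin'_apply, ← isKernelVector_iff_mulVec_eq_zero]
      refine ⟨s ∘ H, hs_ne, ?_⟩
      have hsingle (i : Fin h) : (fun j => if i = j then (1 : ℝ) else 0) = Pi.single i 1 := by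
        ext j
        simp [Pi.single_apply, eq_comm]
      have := hφ' (⟨s, hs_mem⟩, 0)
      rw [altanConstraint_apply, map_zero, add_zero, φ.pi_apply_eq_sum_univ] at this
      simpa [hsingle, mul_comm] using this
  ext j
  exact congrFun ha j

noncomputable def altanLift :
    LinearMap.ker (altanConstraint G H) →ₗ[ℝ] V ⊕ (Fin h ⊕ Fin h) → ℝ where
  toFun x := Sum.elim x.1.1.1 (Sum.elim 0 x.1.2)
  map_add' x y := by ext (_ | _ | _) <;> simp
  map_smul' c x := by ext (_ | _ | _) <;> simp

theorem altanLift_injective : Function.Injective (altanLift G H) := by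
  intro x y hxy
  have hV := congrArg (· ∘ inl) hxy
  have hY := congrArg (· ∘ inr ∘ inr) hxy
  exact Subtype.ext (Prod.ext (Subtype.ext hV) hY)

theorem range_altanLift (hh : 2 ≤ h) (hs : Even h → HasAlternatingKernelVector G H) :
    LinearMap.range (altanLift G H) = LinearMap.ker (toLin' ((altan G H).adjMatrix ℝ)) := by
  ext q
  rw [LinearMap.mem_range, LinearMap.mem_ker, toLin'_apply]
  constructor
  · rintro ⟨⟨⟨⟨p, hp⟩, z⟩, hpz⟩, rfl⟩
    rw [LinearMap.mem_ker, toLin'_apply] at hp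
    rw [LinearMap.mem_ker, altanConstraint_apply, funext_iff] at hpz
    rw [altan_mulVec_eq_zero_iff G H hh]
    refine ⟨fun u => ?_, fun i => ?_, fun j => ?_⟩
    · simpa [altanLift] using congrFun hp u
    · simpa [altanLift, cyclicSum_apply, add_assoc] using hpz i
    · simp [altanLift]
  · intro hq
    have hx := altan_kernel_apply_inr_inl_eq_zero G H hh hs hq
    obtain ⟨hV, hX, -⟩ := (altan_mulVec_eq_zero_iff G H hh q).1 hq
    have hp : q ∘ inl ∈ LinearMap.ker (toLin' (G.adjMatrix ℝ)) := by
      rw [LinearMap.mem_ker, toLin'_apply]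
      ext u
      simpa [hx] using hV u
    have hpz : (⟨q ∘ inl, hp⟩, q ∘ inr ∘ inr) ∈ LinearMap.ker (altanConstraint G H) := by
      rw [LinearMap.mem_ker, altanConstraint_apply]
      ext i
      simpa [cyclicSum_apply, add_assoc] using hX i
    refine ⟨⟨_, hpz⟩, ?_⟩
    ext (_ | _ | _) <;> simp [altanLift, hx]

theorem nullity_altan (hh : 2 ≤ h) (hs : Even h → HasAlternatingKernelVector G H) :
    nullity (altan G H) = nullity G := by
  have hrank := (altanConstraint G H).finrank_range_add_finrank_ker
  rw [LinearMap.range_eq_top.2 (altanConstraint_surjective G H hs), finrank_top,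
    Module.finrank_prod] at hrank
  calc nullity (altan G H) = Module.finrank ℝ (LinearMap.range (altanLift G H)) := by
        rw [range_altanLift G H hh hs]; rfl
    _ = nullity G := by
        rw [LinearMap.finrank_range_of_inj (altanLift_injective G H), nullity_eq_finrank_ker]
        omega

end Altan

section SpecialVector

variable {V : Type*} [Fintype V] {h : ℕ} [NeZero h]

theorem isKernelVector_specialVector (he : Even h) (G : SimpleGraph V) (H : Fin h → V) :
    IsKernelVector (altan G H) (specialVector V h) := by
  have hh : 2 ≤ h := by
    obtain ⟨k, rfl⟩ := he
    have := NeZero.ne (k + k)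
    omega
  rw [isKernelVector_iff_mulVec_eq_zero, altan_mulVec_eq_zero_iff G H hh]
  refine ⟨fun u => by simp [specialVector, mulVec, dotProduct], fun i => ?_,
    fun j => by simp [specialVector]⟩
  obtain ⟨j, rfl⟩ : ∃ j : Fin h, i = j + 1 := ⟨i - 1, (sub_add_cancel i 1).symm⟩
  have hcast : j + 1 = ((j + 1 : ℕ) : Fin h) := by simp
  simp only [specialVector, add_sub_cancel_right, zero_add]
  rw [hcast]
  simp only [pow_succ, Fin.neg_one_pow_val_natCast he]
  ring

theorem hasAlternatingKernelVector_altan (he : Even h) (G : SimpleGraph V) (H : Fin h → V) :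
    HasAlternatingKernelVector (altan G H) (inducedAttachment V h) := by
  refine ⟨specialVector V h, isKernelVector_specialVector he G H, ?_⟩
  have hterm (j : Fin h) :
      (-1 : ℝ) ^ (j : ℕ) * specialVector V h (inducedAttachment V h j) = -1 := by
    rw [inducedAttachment, specialVector, pow_succ, ← mul_assoc, ← pow_add, ← two_mul, pow_mul]
    norm_num
  simp [hterm, NeZero.ne h]

end SpecialVector

/-- the second iterated altan (taken with the induced attachment set) has
the same nullity as the first altan. -/
theorem stmt12 {V : Type*} [Fintype V] {h : ℕ} [NeZero h] (hh : 2 ≤ h)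
    (G : SimpleGraph V) (H : Fin h → V) :
    nullity (altan (altan G H) (inducedAttachment V h)) = nullity (altan G H) :=
  nullity_altan (altan G H) (inducedAttachment V h) hh (hasAlternatingKernelVector_altan · G H)
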